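/- arXiv:2202.11258 — 3 statements merged into one kernel-verified Lean document; each statement's English description precedes it below -/
import Mathlib

section
/- Let n ∈ [N], and let π and ν be partitions of [N] with n contained in block A of π and in block B of ν. Let π₋ₙ and ν₋ₙ denote the partitions of [N]∖{n} obtained by deleting n from its block (removing the block if it becomes empty). Then d(π,ν) = d(π₋ₙ, ν₋ₙ) + 2(|A| + |B| − 2|A ∩ B|). -/
open Finset

/-!
Deleting `n` changes only the blocks containing it: `A` in `π`, `B` in `ν` and `A ∩ B` in the
table of intersections, each losing exactly one element, while a block that becomes empty
contributes `0` to every sum anyway. A block of size `k` shrinking to `k - 1` changes its term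
`k²` by `1 - 2k`, and summing these three changes with the signs of `d` gives the formula.
-/

/-- The distance `d(π,ν) = Σ_{A∈π}|A|² + Σ_{B∈ν}|B|² − 2 Σ_{A∈π,B∈ν}|A∩B|²` between
partitions of finite sets. -/
def partitionDist {α : Type*} [DecidableEq α] {s t : Finset α}
    (π : Finpartition s) (ν : Finpartition t) : ℤ :=
  ∑ A ∈ π.parts, (A.card : ℤ) ^ 2 + ∑ B ∈ ν.parts, (B.card : ℤ) ^ 2
    - 2 * ∑ A ∈ π.parts, ∑ B ∈ ν.parts, ((A ∩ B).card : ℤ) ^ 2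

namespace Finpartition

variable {α M : Type*} [GeneralizedBooleanAlgebra α] [DecidableEq α] [AddCommMonoid M] {a : α}

theorem sum_avoid (P : Finpartition a) (b : α) {f : α → M} (hf : f ⊥ = 0) :
    ∑ c ∈ (P.avoid b).parts, f c = ∑ c ∈ P.parts, f (c \ b) := by
  change ∑ c ∈ (P.parts.image (· \ b)).erase ⊥, f c = _
  rw [sum_erase _ hf,
    sum_image_of_disjoint (f := (· \ b)) hf (P.disjoint.mono_on fun _ _ ↦ sdiff_le)]

end Finpartition

namespace Finset

variable {α ι M : Type*} [DecidableEq α] [AddCommGroup M]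

theorem sum_sub_sdiff_singleton_eq_single (f : Finset α → M) {S : Finset ι}
    {φ : ι → Finset α} {x : α} {i₀ : ι} (hi₀ : i₀ ∈ S)
    (huniq : ∀ i ∈ S, x ∈ φ i → i = i₀) :
    ∑ i ∈ S, (f (φ i \ {x}) - f (φ i)) = f (φ i₀ \ {x}) - f (φ i₀) :=
  sum_eq_single_of_mem i₀ hi₀ fun i hi hne ↦ by
    rw [sdiff_singleton_eq_erase, erase_eq_of_notMem fun hx ↦ hne (huniq i hi hx), sub_self]

theorem sq_card_sdiff_singleton_sub {s : Finset α} {x : α} (hx : x ∈ s) :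
    ((s \ {x}).card : ℤ) ^ 2 - (s.card : ℤ) ^ 2 = 1 - 2 * s.card := by
  rw [sdiff_singleton_eq_erase, cast_card_erase_of_mem hx]
  ring

end Finset

theorem partitionDist_avoid {α : Type*} [DecidableEq α] {s t : Finset α} (π : Finpartition s)
    (ν : Finpartition t) (u : Finset α) :
    partitionDist (π.avoid u) (ν.avoid u) =
      ∑ A ∈ π.parts, ((A \ u).card : ℤ) ^ 2 + ∑ B ∈ ν.parts, ((B \ u).card : ℤ) ^ 2
        - 2 * ∑ A ∈ π.parts, ∑ B ∈ ν.parts, (((A ∩ B) \ u).card : ℤ) ^ 2 := by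
  have inter_sdiff (A B : Finset α) : A \ u ∩ (B \ u) = (A ∩ B) \ u := inf_sdiff.symm
  rw [partitionDist, π.sum_avoid u (by simp), ν.sum_avoid u (by simp), π.sum_avoid u (by simp)]
  simp only [ν.sum_avoid u (f := fun B => ((_ ∩ B).card : ℤ) ^ 2) (by simp), inter_sdiff]

/-- Deleting a point `n` lying in block `A` of `π` and block `B` of `ν` changes the
distance by exactly `2(|A| + |B| − 2|A∩B|)`:
`d(π,ν) = d(π₋ₙ, ν₋ₙ) + 2(|A| + |B| − 2|A∩B|)`. -/
theorem partitionDist_delete_point (N : ℕ) (n : Fin N)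
    (π ν : Finpartition (univ : Finset (Fin N))) (A B : Finset (Fin N))
    (hA : A ∈ π.parts) (hnA : n ∈ A) (hB : B ∈ ν.parts) (hnB : n ∈ B) :
    partitionDist π ν =
      partitionDist (π.avoid {n}) (ν.avoid {n})
        + 2 * ((A.card : ℤ) + (B.card : ℤ) - 2 * ((A ∩ B).card : ℤ)) := by
  let sqCard (C : Finset (Fin N)) : ℤ := (C.card : ℤ) ^ 2
  have hπ : ∑ C ∈ π.parts, (sqCard (C \ {n}) - sqCard C) = 1 - 2 * A.card :=
    (sum_sub_sdiff_singleton_eq_single sqCard (φ := id) hA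
      fun C hC hnC ↦ π.eq_of_mem_parts hC hA hnC hnA).trans (sq_card_sdiff_singleton_sub hnA)
  have hν : ∑ D ∈ ν.parts, (sqCard (D \ {n}) - sqCard D) = 1 - 2 * B.card :=
    (sum_sub_sdiff_singleton_eq_single sqCard (φ := id) hB
      fun D hD hnD ↦ ν.eq_of_mem_parts hD hB hnD hnB).trans (sq_card_sdiff_singleton_sub hnB)
  have hAB_uniq : ∀ p ∈ π.parts ×ˢ ν.parts, n ∈ p.1 ∩ p.2 → p = (A, B) := by
    rintro ⟨C, D⟩ hCD hn
    obtain ⟨hC, hD⟩ := mem_product.1 hCD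
    obtain ⟨hnC, hnD⟩ := mem_inter.1 hn
    exact Prod.ext (π.eq_of_mem_parts hC hA hnC hnA) (ν.eq_of_mem_parts hD hB hnD hnB)
  have hπν : ∑ C ∈ π.parts, ∑ D ∈ ν.parts, (sqCard ((C ∩ D) \ {n}) - sqCard (C ∩ D))
      = 1 - 2 * (A ∩ B).card := by
    rw [← sum_product',
      sum_sub_sdiff_singleton_eq_single sqCard (mem_product.2 ⟨hA, hB⟩) hAB_uniq]
    exact sq_card_sdiff_singleton_sub (mem_inter.2 ⟨hnA, hnB⟩)
  simp only [sqCard, sum_sub_distrib] at hπ hν hπν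
  rw [partitionDist, partitionDist_avoid]
  linear_combination -hπ - hν + 2 * hπν
end

section
/- Call two partitions π, π' of [N] related at site n if their restrictions to [N]∖{n} (obtained by deleting n from its block, removing the block if it becomes empty) are equal. Let 𝟙 denote the partition of [N] with a single block. Then: (i) for every partition X of [N] there exists a sequence of partitions π⁰ = X, π¹, …, π^N = 𝟙 such that π^n is related to π^{n−1} at site n for each n = 1,…,N; and (ii) for every partition X of [N] there exists a sequence π⁰ = 𝟙, π¹, …, π^N = X such that π^n is related to π^{n−1} at site n for each n = 1,…,N. -/
/-!
Let `X⟨B⟩` be `X` with the sites of `B` gathered into one block and the other blocks cut down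
to avoid `B`. Deleting `n` from `X⟨B⟩` and from `X⟨B ∪ {n}⟩` gives the same partition, so
`X⟨{1,…,n}⟩` (`n = 0,…,N`) is a sweep from `X⟨∅⟩ = X` to `X⟨[N]⟩ = 𝟙`, and
`X⟨{n+1,…,N}⟩` is a sweep from `𝟙` to `X`.
-/

open Finset

/-- Two partitions of `[N]` are related at site `n` if their restrictions to `[N]∖{n}`
(deleting `n` from its block) coincide. -/
def RelatedAt {N : ℕ} (n : Fin N) (π π' : Finpartition (univ : Finset (Fin N))) : Prop :=
  π.avoid {n} = π'.avoid {n}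

namespace Finpartition

variable {α : Type*} [GeneralizedBooleanAlgebra α] [DecidableEq α] {a b b' c : α}

/-- `P` with `b` made a part; when `b = ⊥` the empty part is erased and this is `P` itself. -/
def withPart (P : Finpartition a) (hb : b ≤ a) : Finpartition a :=
  ofErase (insert b (P.avoid b).parts)
    ((P.avoid b).supIndep.insert (by rw [sup_parts]; exact disjoint_sdiff_self_right))
    (by rw [sup_insert, sup_parts, id, sup_sdiff_cancel_right hb])

variable (P : Finpartition a)

lemma parts_avoid : (P.avoid b).parts = (P.parts.image (· \ b)).erase ⊥ := rfl

lemma parts_withPart (hb : b ≤ a) :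
    (P.withPart hb).parts = (insert b (P.avoid b).parts).erase ⊥ := rfl

lemma withPart_of_eq_bot (hb : b ≤ a) (hb₀ : b = ⊥) : P.withPart hb = P := by
  subst hb₀
  ext x
  simp only [parts_withPart, parts_avoid, sdiff_bot, image_id', mem_erase, mem_insert]
  exact ⟨fun ⟨hx, h⟩ => (h.resolve_left hx).2,
    fun hx => ⟨P.ne_bot hx, Or.inr ⟨P.ne_bot hx, hx⟩⟩⟩

lemma parts_withPart_of_eq (hb : b ≤ a) (hba : b = a) (ha : a ≠ ⊥) :
    (P.withPart hb).parts = {a} := by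
  subst hba
  ext x
  simp only [parts_withPart, parts_avoid, mem_erase, mem_insert, mem_image, mem_singleton]
  constructor
  · rintro ⟨hx, rfl | ⟨hx', d, hd, rfl⟩⟩
    · rfl
    · exact absurd (sdiff_eq_bot_iff.2 (P.le hd)) hx'
  · rintro rfl
    exact ⟨ha, Or.inl rfl⟩

lemma parts_avoid_withPart (hb : b ≤ a) :
    ((P.withPart hb).avoid c).parts = (insert (b \ c) (P.avoid (b ⊔ c)).parts).erase ⊥ := by
  ext x
  simp only [parts_withPart, parts_avoid, mem_erase, mem_insert, mem_image, and_congr_right_iff]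
  intro hx
  constructor
  · rintro ⟨d, ⟨-, rfl | ⟨-, e, he, rfl⟩⟩, rfl⟩
    · exact Or.inl rfl
    · exact Or.inr ⟨hx, e, he, sdiff_sdiff_left.symm⟩
  · rintro (rfl | ⟨-, e, he, rfl⟩)
    · exact ⟨b, ⟨fun hb => hx (by simp [hb]), Or.inl rfl⟩, rfl⟩
    · refine ⟨e \ b, ⟨?_, Or.inr ⟨?_, e, he, rfl⟩⟩, sdiff_sdiff_left⟩ <;>
        exact fun h => hx (by rw [← sdiff_sdiff_left, h, bot_sdiff])

lemma avoid_withPart_congr (hb : b ≤ a) (hb' : b' ≤ a) (h : b \ c = b' \ c) :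
    (P.withPart hb).avoid c = (P.withPart hb').avoid c := by
  ext1
  rw [parts_avoid_withPart, parts_avoid_withPart, h, ← sdiff_sup_self, h, sdiff_sup_self]

end Finpartition

lemma exists_sweep_withPart {N : ℕ} (X : Finpartition (univ : Finset (Fin N)))
    (b : ℕ → Finset (Fin N)) (hb : ∀ i : Fin N, b (i.val + 1) \ {i} = b i.val \ {i}) :
    ∃ f : ℕ → Finpartition (univ : Finset (Fin N)),
      f 0 = X.withPart (subset_univ (b 0)) ∧ f N = X.withPart (subset_univ (b N)) ∧
      ∀ i : Fin N, RelatedAt i (f (i.val + 1)) (f i.val) :=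
  ⟨fun n => X.withPart (subset_univ (b n)), rfl, rfl,
    fun i => X.avoid_withPart_congr _ _ (hb i)⟩

/-- Any partition `X` of `[N]` can be transformed into the one-block partition `𝟙` by a
single Gibbs sweep (a sequence of `N` moves, the `n`-th of which only reassigns site `n`),
and conversely `𝟙` can be transformed into `X` by a single sweep. -/
theorem gibbs_sweep_reaches_one_block (N : ℕ) (hN : 0 < N)
    (one : Finpartition (univ : Finset (Fin N))) (hone : one.parts = {univ})
    (X : Finpartition (univ : Finset (Fin N))) :
    (∃ f : ℕ → Finpartition (univ : Finset (Fin N)),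
      f 0 = X ∧ f N = one ∧ ∀ i : Fin N, RelatedAt i (f (i.val + 1)) (f i.val)) ∧
    (∃ g : ℕ → Finpartition (univ : Finset (Fin N)),
      g 0 = one ∧ g N = X ∧ ∀ i : Fin N, RelatedAt i (g (i.val + 1)) (g i.val)) := by
  have huniv : (univ : Finset (Fin N)) ≠ ∅ := (univ_nonempty_iff.2 ⟨⟨0, hN⟩⟩).ne_empty
  have hwhole {b : Finset (Fin N)} (hb : b = univ) : X.withPart (subset_univ b) = one :=
    Finpartition.ext (by rw [X.parts_withPart_of_eq _ hb huniv, hone])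
  constructor
  · obtain ⟨f, hf0, hfN, hf⟩ := exists_sweep_withPart X (fun n => univ.filter (·.val < n))
      fun i => by
        ext j
        simp only [mem_sdiff, mem_filter, mem_univ, true_and, mem_singleton, Fin.ext_iff]
        omega
    refine ⟨f, ?_, ?_, hf⟩
    · rw [hf0, X.withPart_of_eq_bot _ (by simp)]
    · rw [hfN, hwhole (filter_true_of_mem fun j _ => j.isLt)]
  · obtain ⟨g, hg0, hgN, hg⟩ := exists_sweep_withPart X (fun n => univ.filter (n ≤ ·.val))
      fun i => by
        ext j
        simp only [mem_sdiff, mem_filter, mem_univ, true_and, mem_singleton, Fin.ext_iff]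
        omega
    refine ⟨g, ?_, ?_, hg⟩
    · rw [hg0, hwhole (by simp)]
    · rw [hgN, X.withPart_of_eq_bot _ (filter_false_of_mem fun j _ => not_le.2 j.isLt)]
end

section
/- Let p be a strictly positive probability mass function on the set of partitions of [N]. For each n ∈ [N], define the Gibbs kernel T_n by: T_n(π, π') = p(π') / Σ_{π'' : π''₋ₙ = π₋ₙ} p(π'') if π'₋ₙ = π₋ₙ, and T_n(π, π') = 0 otherwise. Let T = T_1 T_2 ⋯ T_N be the composition (one Gibbs sweep), and let 𝟙 denote the one-block partition of [N]. Then for every partition X of [N]: T(X, X) > 0, T(X, 𝟙) > 0, and T(𝟙, X) > 0. Consequently, T²(X, Y) > 0 for all partitions X, Y, so the Gibbs-sweep Markov chain is irreducible and aperiodic. -/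
open Finset
open scoped Classical

/-- The single-site Gibbs kernel `T_n` for a target pmf `p` on partitions of `[N]`:
`T_n(π,π') = p(π') / Σ_{π'' : π''₋ₙ = π₋ₙ} p(π'')` if `π'₋ₙ = π₋ₙ`, and `0` otherwise. -/
noncomputable def gibbsKernel {N : ℕ} (p : Finpartition (univ : Finset (Fin N)) → ℝ)
    (n : Fin N) :
    Matrix (Finpartition (univ : Finset (Fin N))) (Finpartition (univ : Finset (Fin N))) ℝ :=
  fun π π' =>
    if π'.avoid {n} = π.avoid {n} then
      p π' / ∑ π'' ∈ Finset.univ.filter (fun π'' => π''.avoid {n} = π.avoid {n}), p π''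
    else 0

/-- One Gibbs sweep: the composition `T = T_1 T_2 ⋯ T_N`. -/
noncomputable def gibbsSweep {N : ℕ}
    (p : Finpartition (univ : Finset (Fin N)) → ℝ) :
    Matrix (Finpartition (univ : Finset (Fin N))) (Finpartition (univ : Finset (Fin N))) ℝ :=
  (List.ofFn fun n : Fin N => gibbsKernel p n).prod

namespace Finpartition

variable {α : Type*} [DecidableEq α]

theorem ext_part {s : Finset α} {P Q : Finpartition s} (h : ∀ a, P.part a = Q.part a) :
    P = Q := by
  ext t
  constructor
  · intro ht
    obtain ⟨a, ha, rfl⟩ := P.part_surjOn ht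
    exact h a ▸ Q.part_mem.2 ha
  · intro ht
    obtain ⟨a, ha, rfl⟩ := Q.part_surjOn ht
    exact (h a).symm ▸ P.part_mem.2 ha

theorem part_avoid_singleton {s : Finset α} (P : Finpartition s) {n a : α} (ha : a ∈ s)
    (han : a ≠ n) : (P.avoid {n}).part a = P.part a \ {n} := by
  refine part_eq_of_mem _ (P.mem_avoid.2 ⟨P.part a, P.part_mem.2 ha, ?_, rfl⟩) ?_
  · exact fun hle => han (mem_singleton.1 (hle (P.mem_part ha)))
  · exact mem_sdiff.2 ⟨P.mem_part ha, by simpa using han⟩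

theorem avoid_singleton_eq_of_mem_part_iff {s : Finset α} {P Q : Finpartition s} {n : α}
    (h : ∀ a b, a ≠ n → b ≠ n → (b ∈ P.part a ↔ b ∈ Q.part a)) :
    P.avoid {n} = Q.avoid {n} := by
  refine ext_part fun a => ?_
  by_cases ha : a ∈ s \ {n}
  · obtain ⟨has, han⟩ : a ∈ s ∧ a ≠ n := by simpa using ha
    rw [part_avoid_singleton P has han, part_avoid_singleton Q has han]
    ext b
    simp only [mem_sdiff, mem_singleton]
    exact and_congr_left fun hbn => h a b han hbn
  · rw [(part_eq_empty _).2 ha, (part_eq_empty _).2 ha]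

theorem ofSetoid_ker_part [Fintype α] (P : Finpartition (univ : Finset α)) :
    ofSetoid (Setoid.ker P.part) = P := by
  refine ext_part fun a => Finset.ext fun b => ?_
  rw [mem_part_ofSetoid_iff_rel, Setoid.ker_def, P.mem_part_iff_part_eq_part (mem_univ b)
    (mem_univ a), eq_comm]

end Finpartition

namespace Setoid

variable {α : Type*}

def piecewise (S : Set α) (r s : Setoid α) : Setoid α where
  r i j := (i ∈ S ∧ j ∈ S ∧ r i j) ∨ (i ∉ S ∧ j ∉ S ∧ s i j)
  iseqv := by
    refine ⟨fun i => ?_, ?_, ?_⟩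
    · by_cases hi : i ∈ S
      exacts [Or.inl ⟨hi, hi, r.refl i⟩, Or.inr ⟨hi, hi, s.refl i⟩]
    · rintro i j (⟨hi, hj, h⟩ | ⟨hi, hj, h⟩)
      exacts [Or.inl ⟨hj, hi, r.symm h⟩, Or.inr ⟨hj, hi, s.symm h⟩]
    · rintro i j l (⟨hi, hj, h⟩ | ⟨hi, hj, h⟩) (⟨hj', hl, h'⟩ | ⟨hj', hl, h'⟩)
      · exact Or.inl ⟨hi, hl, r.trans h h'⟩
      · exact absurd hj hj'
      · exact absurd hj' hj
      · exact Or.inr ⟨hi, hl, s.trans h h'⟩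

variable (r s : Setoid α)

theorem piecewise_rel_iff {S : Set α} {i j : α} :
    piecewise S r s i j ↔ (i ∈ S ∧ j ∈ S ∧ r i j) ∨ (i ∉ S ∧ j ∉ S ∧ s i j) :=
  Iff.rfl

@[simp]
theorem piecewise_empty : piecewise ∅ r s = s :=
  ext fun i j => by simp [piecewise_rel_iff]

@[simp]
theorem piecewise_univ : piecewise Set.univ r s = r :=
  ext fun i j => by simp [piecewise_rel_iff]

theorem piecewise_insert_rel_iff {S : Set α} {n i j : α} (hi : i ≠ n) (hj : j ≠ n) :
    piecewise (insert n S) r s i j ↔ piecewise S r s i j := by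
  simp [piecewise_rel_iff, hi, hj]

end Setoid

namespace Matrix

variable {ι R : Type*} [Fintype ι] [DecidableEq ι] [Semiring R] [PartialOrder R]
  [IsStrictOrderedRing R]

theorem prod_ofFn_apply_nonneg {n : ℕ} (M : Fin n → Matrix ι ι R) (hM : ∀ k i j, 0 ≤ M k i j)
    (i j : ι) : 0 ≤ (List.ofFn M).prod i j := by
  induction n generalizing i with
  | zero => by_cases h : i = j <;> simp [h]
  | succ n ih =>
    rw [List.ofFn_succ, List.prod_cons, mul_apply]
    exact sum_nonneg fun l _ => mul_nonneg (hM 0 i l) (ih _ (fun k => hM k.succ) l)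

theorem prod_ofFn_apply_pos_of_chain {n : ℕ} (M : Fin n → Matrix ι ι R)
    (hM : ∀ k i j, 0 ≤ M k i j) (c : Fin (n + 1) → ι)
    (hc : ∀ k : Fin n, 0 < M k (c k.castSucc) (c k.succ)) :
    0 < (List.ofFn M).prod (c 0) (c (Fin.last n)) := by
  induction n with
  | zero => simp
  | succ n ih =>
    rw [List.ofFn_succ, List.prod_cons, mul_apply]
    have htail_nonneg := prod_ofFn_apply_nonneg _ fun k => hM k.succ
    refine sum_pos' (fun l _ => mul_nonneg (hM 0 _ l) (htail_nonneg l _))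
      ⟨c 1, mem_univ _, mul_pos (hc 0) ?_⟩
    exact ih _ (fun k => hM k.succ) (fun k => c k.succ) (fun k => hc k.succ)

end Matrix

section Gibbs

variable {N : ℕ} {p : Finpartition (univ : Finset (Fin N)) → ℝ}

theorem gibbsKernel_nonneg (hp : ∀ π, 0 < p π) (n : Fin N)
    (π π' : Finpartition (univ : Finset (Fin N))) : 0 ≤ gibbsKernel p n π π' := by
  unfold gibbsKernel
  split_ifs
  · exact div_nonneg (hp π').le (sum_nonneg fun π'' _ => (hp π'').le)
  · exact le_rfl

theorem gibbsKernel_pos (hp : ∀ π, 0 < p π) {n : Fin N}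
    {π π' : Finpartition (univ : Finset (Fin N))} (h : π'.avoid {n} = π.avoid {n}) :
    0 < gibbsKernel p n π π' := by
  rw [gibbsKernel, if_pos h]
  exact div_pos (hp π') (sum_pos (fun π'' _ => hp π'') ⟨π, by simp⟩)

theorem gibbsSweep_pos_of_chain (hp : ∀ π, 0 < p π)
    (c : Fin (N + 1) → Finpartition (univ : Finset (Fin N)))
    (hc : ∀ n : Fin N, (c n.succ).avoid {n} = (c n.castSucc).avoid {n}) :
    0 < gibbsSweep p (c 0) (c (Fin.last N)) :=
  Matrix.prod_ofFn_apply_pos_of_chain _ (gibbsKernel_nonneg hp) c fun n =>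
    gibbsKernel_pos hp (hc n)

/-- Each site is resampled once per sweep, so it can be moved from its block in `X` to its
block in `Y`: after `k` steps the sites `< k` are arranged as in `Y`, the others as in `X`. -/
theorem gibbsSweep_pos_apply (hp : ∀ π, 0 < p π) (X Y : Finpartition (univ : Finset (Fin N))) :
    0 < gibbsSweep p X Y := by
  let c : Fin (N + 1) → Finpartition (univ : Finset (Fin N)) := fun k =>
    Finpartition.ofSetoid
      (Setoid.piecewise {i | i.castSucc < k} (Setoid.ker Y.part) (Setoid.ker X.part))
  have hc : ∀ n : Fin N, (c n.succ).avoid {n} = (c n.castSucc).avoid {n} := by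
    intro n
    refine Finpartition.avoid_singleton_eq_of_mem_part_iff fun a b ha hb => ?_
    have hS : {i : Fin N | i.castSucc < n.succ} = insert n {i | i.castSucc < n.castSucc} := by
      ext i
      simp [Fin.castSucc_lt_succ_iff, le_iff_eq_or_lt]
    simp only [c, Finpartition.mem_part_ofSetoid_iff_rel, hS]
    exact Setoid.piecewise_insert_rel_iff _ _ ha hb
  have h0 : c 0 = X := by simp [c, Finpartition.ofSetoid_ker_part]
  have hlast : c (Fin.last N) = Y := by
    simp [c, Fin.castSucc_lt_last, Finpartition.ofSetoid_ker_part]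
  simpa only [h0, hlast] using gibbsSweep_pos_of_chain hp c hc

end Gibbs

theorem gibbsSweep_pos_general (N : ℕ)
    (p : Finpartition (univ : Finset (Fin N)) → ℝ)
    (hp : ∀ π, 0 < p π)
    (one : Finpartition (univ : Finset (Fin N))) :
    (∀ X, 0 < gibbsSweep p X X ∧ 0 < gibbsSweep p X one ∧ 0 < gibbsSweep p one X) ∧
    (∀ X Y, 0 < (gibbsSweep p * gibbsSweep p) X Y) := by
  refine ⟨fun X => ⟨gibbsSweep_pos_apply hp X X, gibbsSweep_pos_apply hp X one,
    gibbsSweep_pos_apply hp one X⟩, fun X Y => ?_⟩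
  rw [Matrix.mul_apply]
  exact sum_pos (fun Z _ => mul_pos (gibbsSweep_pos_apply hp X Z) (gibbsSweep_pos_apply hp Z Y))
    ⟨X, mem_univ X⟩

/-- For a strictly positive target pmf `p` on partitions of `[N]`, the Gibbs-sweep kernel
`T` satisfies `T(X,X) > 0`, `T(X,𝟙) > 0` and `T(𝟙,X) > 0` for every partition `X`, where
`𝟙` is the one-block partition; consequently `T²(X,Y) > 0` for all `X, Y`, so the chain is
irreducible and aperiodic. -/
theorem gibbsSweep_pos (N : ℕ) (hN : 0 < N)
    (p : Finpartition (univ : Finset (Fin N)) → ℝ)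
    (hp : ∀ π, 0 < p π) (hsum : ∑ π, p π = 1)
    (one : Finpartition (univ : Finset (Fin N))) (hone : one.parts = {univ}) :
    (∀ X, 0 < gibbsSweep p X X ∧ 0 < gibbsSweep p X one ∧ 0 < gibbsSweep p one X) ∧
    (∀ X Y, 0 < (gibbsSweep p * gibbsSweep p) X Y) :=
  gibbsSweep_pos_general N p hp one
end
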